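/- arXiv:2502.04454 — 5 statements merged into one kernel-verified Lean document; each statement's English description precedes it below -/
import Mathlib

section
/- For 0 ≤ ε₀ < 2 and τ > 0, the function r² ↦ 2·√(1 − ((2−ε₀)/2)^{2r²/τ² + r/τ + 2}) (viewed as a function of u = r² ≥ 0, with r = √u) is concave in u and tends to 0 pointwise as ε₀ → 0. -/
/-! With `c = (2 - ε₀)/2 ∈ (0, 1]`, the function is the concave exponent
`u ↦ 2u/τ² + √u/τ + 2` followed by the increasing concave maps `t ↦ 1 - c^t` and
`x ↦ 2√x`, hence concave. At `ε₀ = 0` the base is `c = 1`, so the value is `2√(1 - 1) = 0`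
and the limit is continuity of `ε₀ ↦ c^e` at a positive base. -/

open Real Filter Set

section Concavity

variable {E : Type*} [AddCommGroup E] [Module ℝ E] {s : Set E} {f : E → ℝ}

/-- Unlike `ConcaveOn.comp`, this only asks `g` to be concave on a convex superset of `f '' s`;
the image itself need not be convex, since `f` may jump down at the boundary of `s`. -/
theorem ConcaveOn.comp_of_mapsTo {t : Set ℝ} {g : ℝ → ℝ} (hg : ConcaveOn ℝ t g)
    (hg_mono : MonotoneOn g t) (hf : ConcaveOn ℝ s f) (hst : MapsTo f s t) :
    ConcaveOn ℝ s (g ∘ f) := by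
  refine ⟨hf.1, fun x hx y hy a b ha hb hab => ?_⟩
  calc a • g (f x) + b • g (f y) ≤ g (a • f x + b • f y) :=
        hg.2 (hst hx) (hst hy) ha hb hab
    _ ≤ g (f (a • x + b • y)) :=
        hg_mono (hg.1 (hst hx) (hst hy) ha hb hab) (hst (hf.1 hx hy ha hb hab))
          (hf.2 hx hy ha hb hab)

theorem ConcaveOn.sqrt (hf : ConcaveOn ℝ s f) (hf₀ : ∀ x ∈ s, 0 ≤ f x) :
    ConcaveOn ℝ s (fun x => √(f x)) :=
  strictConcaveOn_sqrt.concaveOn.comp_of_mapsTo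
    (fun _ _ _ _ hxy => Real.sqrt_le_sqrt hxy) hf hf₀

theorem ConcaveOn.one_sub_rpow_left {c : ℝ} (hc₀ : 0 < c) (hc₁ : c ≤ 1)
    (hf : ConcaveOn ℝ s f) : ConcaveOn ℝ s (fun x => 1 - c ^ f x) :=
  ((concaveOn_const 1 convex_univ).sub (convexOn_rpow_left hc₀)).comp_of_mapsTo
    (fun _ _ _ _ hxy => sub_le_sub_left (Real.rpow_le_rpow_of_exponent_ge hc₀ hc₁ hxy) 1)
    hf (mapsTo_univ _ _)

end Concavity

theorem concaveOn_two_mul_div_sq_add_sqrt_div_add_two {τ : ℝ} (hτ : 0 ≤ τ) :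
    ConcaveOn ℝ (Ici 0) (fun u : ℝ => 2 * u / τ ^ 2 + √u / τ + 2) := by
  have hlin : ConcaveOn ℝ (Ici 0) (fun u : ℝ => 2 / τ ^ 2 * u) :=
    (concaveOn_id (convex_Ici 0)).smul (by positivity)
  have hsqrt : ConcaveOn ℝ (Ici 0) (fun u : ℝ => τ⁻¹ * √u) :=
    strictConcaveOn_sqrt.concaveOn.smul (inv_nonneg.2 hτ)
  have hform : (fun u : ℝ => 2 * u / τ ^ 2 + √u / τ + 2)
      = fun u => 2 / τ ^ 2 * u + τ⁻¹ * √u + 2 := by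
    funext u; ring
  rw [hform]
  exact (hlin.add hsqrt).add_const 2

theorem tendsto_two_mul_sqrt_one_sub_rpow_nhds_zero (x : ℝ) :
    Tendsto (fun ε : ℝ => 2 * √(1 - ((2 - ε) / 2) ^ x)) (nhds 0) (nhds 0) := by
  have hcont : ContinuousAt (fun ε : ℝ => 2 * √(1 - ((2 - ε) / 2) ^ x)) 0 := by
    fun_prop (disch := norm_num)
  simpa using hcont.tendsto

/-- The bounding function `u ↦ 2√(1 − ((2−ε₀)/2)^{2u/τ² + √u/τ + 2})` is concave
in `u = r²` on `[0,∞)`, and for each fixed `u` it tends to `0` as `ε₀ → 0⁺`. -/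
theorem stmt4 (τ : ℝ) (hτ : 0 < τ) :
    (∀ ε₀ : ℝ, 0 ≤ ε₀ → ε₀ < 2 →
      ConcaveOn ℝ (Set.Ici 0)
        (fun u : ℝ =>
          2 * Real.sqrt (1 - ((2 - ε₀) / 2) ^
            (2 * u / τ ^ 2 + Real.sqrt u / τ + 2 : ℝ)))) ∧
    (∀ u : ℝ, 0 ≤ u →
      Tendsto
        (fun ε₀ : ℝ =>
          2 * Real.sqrt (1 - ((2 - ε₀) / 2) ^
            (2 * u / τ ^ 2 + Real.sqrt u / τ + 2 : ℝ)))
        (nhdsWithin 0 (Set.Ioi 0)) (nhds 0)) := by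
  refine ⟨fun ε₀ hε₀ hε₀_lt => ?_, fun u _ => ?_⟩
  · have hc₀ : 0 < (2 - ε₀) / 2 := by linarith
    have hc₁ : (2 - ε₀) / 2 ≤ 1 := by linarith
    have hbase :=
      (concaveOn_two_mul_div_sq_add_sqrt_div_add_two hτ.le).one_sub_rpow_left hc₀ hc₁
    have hbase_nonneg : ∀ u ∈ Ici (0 : ℝ),
        0 ≤ 1 - ((2 - ε₀) / 2) ^ (2 * u / τ ^ 2 + √u / τ + 2) := fun u (hu : 0 ≤ u) =>
      sub_nonneg.2 (rpow_le_one hc₀.le hc₁ (by positivity))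
    exact (hbase.sqrt hbase_nonneg).smul zero_le_two
  · exact (tendsto_two_mul_sqrt_one_sub_rpow_nhds_zero _).mono_left nhdsWithin_le_nhds
end

section
/- For any real λ with 0 ≤ λ < 1 and odd natural number M, √(1−λ²) · ∑_{p=0}^{(M−1)/2} λ^{2p} · (2p)! / (4^p · (p!)²) ≥ 1 − λ²/(M(1−λ²)). -/
/-!
The weights `a p = C(2p, p) / 4 ^ p` are the coefficients of the binomial series of `(1 - x) ^ (-1/2)`,
so `√(1 - x)` times the full series is exactly `1` and only the tail `p ≥ K = (M + 1) / 2`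
has to be bounded. The recurrence `(p + 1) a (p + 1) = (p + 1/2) a p` gives
`∑ p a p x ^ p = x / (2 (1 - x)) · (1 - x) ^ (-1/2)`, and Markov's inequality
`K ∑_{p ≥ K} a p x ^ p ≤ ∑ p a p x ^ p` bounds `√(1 - x)` times the tail by
`x / (2 K (1 - x)) ≤ x / (M (1 - x))`.
-/

open Nat

lemma ascPochhammer_eval_half_mul_four_pow (n : ℕ) :
    (ascPochhammer ℝ n).eval (1 / 2) * 4 ^ n = n ! * centralBinom n := by
  induction n with
  | zero => simp
  | succ n ih =>
    have h : ((n + 1 : ℕ) : ℝ) * centralBinom (n + 1) = 2 * (2 * n + 1) * centralBinom n := by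
      exact_mod_cast succ_mul_centralBinom_succ n
    rw [ascPochhammer_succ_eval, factorial_succ]
    push_cast at h ⊢
    linear_combination (4 * n + 2) * ih - n ! * h

lemma Ring.choose_half_add_sub_one (n : ℕ) :
    Ring.choose (1 / 2 + n - 1 : ℝ) n = centralBinom n / 4 ^ n := by
  have h := Ring.factorial_nsmul_multichoose_eq_ascPochhammer (1 / 2 : ℝ) n
  rw [Ring.multichoose_eq, Polynomial.ascPochhammer_smeval_eq_eval, nsmul_eq_mul] at h
  rw [eq_div_iff (by positivity), ← mul_right_inj' (cast_ne_zero.2 (factorial_ne_zero n)),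
    ← ascPochhammer_eval_half_mul_four_pow, ← h]
  ring

theorem hasSum_centralBinom_div_four_pow_mul_pow {x : ℝ} (hx : |x| < 1) :
    HasSum (fun n ↦ centralBinom n / 4 ^ n * x ^ n) (√(1 - x))⁻¹ := by
  have h := (Real.one_div_one_sub_rpow_hasFPowerSeriesOnBall_zero (1 / 2)).hasSum
    (y := x) (by simpa [enorm_eq_nnnorm, ← NNReal.coe_lt_one] using hx)
  simp only [FormalMultilinearSeries.ofScalars_apply_eq, smul_eq_mul, zero_add,
    Ring.choose_half_add_sub_one] at h
  rwa [Real.sqrt_eq_rpow, inv_eq_one_div]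

lemma succ_mul_centralBinom_succ_div_four_pow (n : ℕ) :
    (n + 1 : ℝ) * (centralBinom (n + 1) / 4 ^ (n + 1)) =
      (n + 1 / 2) * (centralBinom n / 4 ^ n) := by
  have h : ((n + 1 : ℕ) : ℝ) * centralBinom (n + 1) = 2 * (2 * n + 1) * centralBinom n := by
    exact_mod_cast succ_mul_centralBinom_succ n
  push_cast at h
  rw [pow_succ]
  field_simp
  linear_combination 2 * h

theorem hasSum_nat_mul_centralBinom_div_four_pow_mul_pow {x : ℝ} (hx : |x| < 1) :
    HasSum (fun n ↦ n * (centralBinom n / 4 ^ n * x ^ n))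
      (x / (2 * (1 - x)) * (√(1 - x))⁻¹) := by
  set b : ℕ → ℝ := fun n ↦ centralBinom n / 4 ^ n * x ^ n
  have hS : HasSum b (√(1 - x))⁻¹ := hasSum_centralBinom_div_four_pow_mul_pow hx
  obtain ⟨D, hD⟩ : Summable fun n ↦ n * b n := by
    refine .of_norm_bounded (summable_pow_mul_geometric_of_norm_lt_one 1 (r := |x|) (by simpa)) ?_
    intro n
    have hb : centralBinom n / 4 ^ n ≤ (1 : ℝ) := by
      rw [div_le_one (by positivity)]
      exact_mod_cast centralBinom_le_four_pow n
    simp only [b, norm_mul, norm_div, norm_pow, Real.norm_eq_abs, pow_one, Nat.abs_cast,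
      abs_of_pos (by positivity : (0 : ℝ) < 4)]
    gcongr
    exact mul_le_of_le_one_left (by positivity) hb
  -- shifting the index by one turns the recurrence for the coefficients into `D = x (D + S / 2)`
  have hshift : HasSum (fun n ↦ (n + 1 : ℕ) * b (n + 1)) D := by
    simpa using (hasSum_nat_add_iff' 1).2 hD
  have hrec : HasSum (fun n ↦ (n + 1 : ℕ) * b (n + 1)) (x * (D + (√(1 - x))⁻¹ / 2)) := by
    refine ((hD.add (hS.div_const 2)).mul_left x).congr_fun fun n ↦ ?_
    have := succ_mul_centralBinom_succ_div_four_pow n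
    simp only [b]
    push_cast
    linear_combination x * x ^ n * this
  have hx1 : 1 - x ≠ 0 := by linarith [le_abs_self x]
  have := hshift.unique hrec
  convert hD using 1
  field_simp
  linear_combination (-2) * this

lemma nat_mul_tsum_nat_add_le {f : ℕ → ℝ} (hf : ∀ n, 0 ≤ f n) (hs : Summable f)
    (hs' : Summable fun n ↦ n * f n) (k : ℕ) :
    k * ∑' n, f (n + k) ≤ ∑' n, n * f n := by
  rw [← tsum_mul_left, ← hs'.sum_add_tsum_nat_add k]
  refine le_add_of_nonneg_of_le (Finset.sum_nonneg fun n _ ↦ mul_nonneg n.cast_nonneg (hf n)) ?_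
  refine Summable.tsum_le_tsum (fun n ↦ ?_) (((summable_nat_add_iff k).2 hs).mul_left (k : ℝ))
    ((summable_nat_add_iff k).2 hs')
  gcongr
  · exact hf _
  · linarith [n.cast_nonneg (α := ℝ)]

theorem one_sub_div_le_sqrt_one_sub_mul_sum_range {x : ℝ} (hx0 : 0 ≤ x) (hx1 : x < 1) {K : ℕ}
    (hK : 0 < K) :
    1 - x / (2 * K * (1 - x)) ≤
      √(1 - x) * ∑ p ∈ Finset.range K, centralBinom p / 4 ^ p * x ^ p := by
  have hx : |x| < 1 := abs_lt.2 ⟨by linarith, hx1⟩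
  have hS := hasSum_centralBinom_div_four_pow_mul_pow hx
  have hD := hasSum_nat_mul_centralBinom_div_four_pow_mul_pow hx
  have hsplit := hS.summable.sum_add_tsum_nat_add K
  have htail := nat_mul_tsum_nat_add_le (fun n ↦ by positivity) hS.summable hD.summable K
  rw [hS.tsum_eq] at hsplit
  rw [hD.tsum_eq] at htail
  set T := ∑' n, (centralBinom (n + K) : ℝ) / 4 ^ (n + K) * x ^ (n + K)
  have hs : 0 < √(1 - x) := Real.sqrt_pos.2 (by linarith)
  have h1x : 0 < 1 - x := by linarith
  have hsT : √(1 - x) * T ≤ x / (2 * K * (1 - x)) := by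
    rw [le_div_iff₀ (by positivity)]
    calc √(1 - x) * T * (2 * K * (1 - x)) = 2 * (1 - x) * √(1 - x) * (K * T) := by ring
      _ ≤ 2 * (1 - x) * √(1 - x) * (x / (2 * (1 - x)) * (√(1 - x))⁻¹) := by gcongr
      _ = x := by field_simp
  calc 1 - x / (2 * K * (1 - x)) ≤ 1 - √(1 - x) * T := by linarith
    _ = √(1 - x) * ∑ p ∈ Finset.range K, centralBinom p / 4 ^ p * x ^ p := by
      rw [eq_sub_of_add_eq hsplit, mul_sub, mul_inv_cancel₀ hs.ne']

/-- Lower bound on the probability that a one-mode squeezed vacuum with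
parameter `λ` has at most `M−1` photons: for odd `M`,
`√(1−λ²) ∑_{p=0}^{(M−1)/2} λ^{2p} (2p)!/(4^p (p!)²) ≥ 1 − λ²/(M(1−λ²))`. -/
theorem stmt10 (lam : ℝ) (hl0 : 0 ≤ lam) (hl1 : lam < 1) (M : ℕ) (hM : Odd M) :
    1 - lam ^ 2 / (M * (1 - lam ^ 2)) ≤
      Real.sqrt (1 - lam ^ 2) *
        ∑ p ∈ Finset.range ((M - 1) / 2 + 1),
          lam ^ (2 * p) * (Nat.factorial (2 * p) : ℝ) /
            (4 ^ p * (Nat.factorial p : ℝ) ^ 2) := by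
  obtain ⟨m, rfl⟩ := hM
  have hx1 : lam ^ 2 < 1 := pow_lt_one₀ hl0 hl1 two_ne_zero
  have hterm (p : ℕ) : lam ^ (2 * p) * (2 * p)! / (4 ^ p * (p ! : ℝ) ^ 2) =
      centralBinom p / 4 ^ p * (lam ^ 2) ^ p := by
    rw [centralBinom_eq_two_mul_choose, cast_choose ℝ (by omega), ← pow_mul,
      show 2 * p - p = p by omega]
    ring
  simp_rw [hterm, show (2 * m + 1 - 1) / 2 + 1 = m + 1 by omega]
  refine le_trans ?_ (one_sub_div_le_sqrt_one_sub_mul_sum_range (sq_nonneg lam) hx1 m.succ_pos)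
  gcongr
  push_cast
  linarith
end

section
/- Let q > 0 and set N(q) = e^{−1/(1+q)}·(1 + 1/q) − 1. Then N(q) > 0 for all q > 0, N(q) → ∞ as q → 0⁺, and N(q) → 0 as q → ∞. -/
open Filter Topology Real

noncomputable def negativity (q : ℝ) : ℝ := exp (-1 / (1 + q)) * (1 + 1 / q) - 1

lemma one_sub_inv_lt_exp_neg_inv {t : ℝ} (ht : t ≠ 0) : 1 - t⁻¹ < exp (-t⁻¹) := by
  have := add_one_lt_exp (neg_ne_zero.mpr (inv_ne_zero ht))
  linarith

/-- `e^{-1/(1+q)} > 1 - 1/(1+q) = q/(1+q)`, and `q/(1+q)` is the reciprocal of `1 + 1/q`. -/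
lemma negativity_pos {q : ℝ} (hq : 0 < q) : 0 < negativity q := by
  have hq1 : 1 + q ≠ 0 := by positivity
  have hexp : 1 - (1 + q)⁻¹ < exp (-1 / (1 + q)) := by
    simpa only [neg_div, one_div] using one_sub_inv_lt_exp_neg_inv hq1
  have hprod : (1 - (1 + q)⁻¹) * (1 + 1 / q) = 1 := by field_simp; ring
  have hfactor : 0 < 1 + 1 / q := by positivity
  unfold negativity
  nlinarith [mul_lt_mul_of_pos_right hexp hfactor]

lemma tendsto_negativity_nhdsGT_zero : Tendsto negativity (𝓝[>] 0) atTop := by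
  have hexp : Tendsto (fun q : ℝ => exp (-1 / (1 + q))) (𝓝[>] 0) (𝓝 (exp (-1))) := by
    have hcont : ContinuousAt (fun q : ℝ => exp (-1 / (1 + q))) 0 :=
      continuous_exp.continuousAt.comp (continuousAt_const.div (by fun_prop) (by norm_num))
    simpa using hcont.tendsto.mono_left nhdsWithin_le_nhds
  have hfactor : Tendsto (fun q : ℝ => 1 + 1 / q) (𝓝[>] 0) atTop :=
    tendsto_atTop_add_const_left _ 1 (tendsto_inv_nhdsGT_zero.congr fun q => (one_div q).symm)
  exact tendsto_atTop_add_const_right _ (-1) (hexp.pos_mul_atTop (exp_pos _) hfactor)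

lemma tendsto_negativity_atTop : Tendsto negativity atTop (𝓝 0) := by
  have hexp : Tendsto (fun q : ℝ => exp (-1 / (1 + q))) atTop (𝓝 1) := by
    have harg : Tendsto (fun q : ℝ => -1 / (1 + q)) atTop (𝓝 0) :=
      tendsto_const_nhds.div_atTop (tendsto_atTop_add_const_left _ 1 tendsto_id)
    simpa only [exp_zero] using harg.rexp
  have hfactor : Tendsto (fun q : ℝ => 1 + 1 / q) atTop (𝓝 1) := by
    simpa only [add_zero, id] using (tendsto_const_nhds (x := (1 : ℝ))).add
      (tendsto_const_nhds.div_atTop tendsto_id)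
  have hlim := (hexp.mul hfactor).sub_const 1
  rwa [mul_one, sub_self] at hlim

/-- The negativity `N(q) = e^{−1/(1+q)}(1+1/q) − 1` of a single-photon-added
thermal state is positive for all `q > 0`, diverges as `q → 0⁺`, and tends to
`0` as `q → ∞`. -/
theorem stmt16 :
    (∀ q : ℝ, 0 < q → 0 < Real.exp (-1 / (1 + q)) * (1 + 1 / q) - 1) ∧
    Tendsto (fun q : ℝ => Real.exp (-1 / (1 + q)) * (1 + 1 / q) - 1)
      (nhdsWithin 0 (Set.Ioi 0)) atTop ∧
    Tendsto (fun q : ℝ => Real.exp (-1 / (1 + q)) * (1 + 1 / q) - 1)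
      atTop (nhds 0) :=
  ⟨fun _ => negativity_pos, tendsto_negativity_nhdsGT_zero, tendsto_negativity_atTop⟩
end

section
/- For q > 0 and 0 ≤ s < 1, the convolution identity holds: (1/(sπ))·e^{−|α|²/s} convolved (over ℂ ≅ ℝ²) with P(α) = ((1+q)/(πq³))·(|α|² − q/(1+q))·e^{−|α|²/q} equals ((1+q)/(π(q+s)³))·(|α|² − (q+s)(1−s)/(1+q))·e^{−|α|²/(q+s)}. -/
/-!
Multiplying the two Gaussians and completing the square turns the integrand into
`e^{-|α|²/(q+s)}` times `(|β|² - q/(1+q)) e^{-k|β - mα|²}` with `k = (q+s)/(sq)`, `m = q/(q+s)`.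
After translating `β` by `mα`, only the moments `∫ e^{-k|z|²} = π/k` and
`∫ |z|² e^{-k|z|²} = π/k²` remain, because against an even weight `‖z + c‖²` may be replaced
by `‖z‖² + ‖c‖²`.
-/

open MeasureTheory Real

theorem exp_neg_norm_sub_sq_div_mul_exp_neg_norm_sq_div {E : Type*} [NormedAddCommGroup E]
    [InnerProductSpace ℝ E] {q s : ℝ} (hq : q ≠ 0) (hs : s ≠ 0) (hqs : q + s ≠ 0) (a b : E) :
    rexp (-‖a - b‖ ^ 2 / s) * rexp (-‖b‖ ^ 2 / q) =
      rexp (-‖a‖ ^ 2 / (q + s)) * rexp (-((q + s) / (s * q)) * ‖b - (q / (q + s)) • a‖ ^ 2) := by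
  rw [← exp_add, ← exp_add, norm_sub_sq_real, norm_sub_sq_real, norm_smul, inner_smul_right,
    real_inner_comm, norm_eq_abs, mul_pow, sq_abs]
  congr 1
  field_simp
  ring

section EvenWeight

variable {E : Type*} [NormedAddCommGroup E] [InnerProductSpace ℝ E] [MeasurableSpace E]
  [BorelSpace E] {μ : Measure E} {g : E → ℝ}

theorem integrable_norm_add_sq_mul (hg : Integrable g μ)
    (hg₂ : Integrable (fun x ↦ ‖x‖ ^ 2 * g x) μ) (c : E) :
    Integrable (fun x ↦ ‖x + c‖ ^ 2 * g x) μ := by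
  refine ((hg₂.norm.add (hg.norm.const_mul (‖c‖ ^ 2))).const_mul 2).mono'
    ((by fun_prop : Continuous fun x ↦ ‖x + c‖ ^ 2).aestronglyMeasurable.mul hg.1)
    (Filter.Eventually.of_forall fun x ↦ ?_)
  have hpar := parallelogram_law_with_norm ℝ x c
  simp only [Pi.add_apply, norm_mul, norm_pow, norm_norm]
  nlinarith [norm_nonneg (g x), sq_nonneg ‖x - c‖]

theorem integral_norm_add_sq_mul_of_even [μ.IsNegInvariant] (hg_even : ∀ x, g (-x) = g x)
    (hg : Integrable g μ) (hg₂ : Integrable (fun x ↦ ‖x‖ ^ 2 * g x) μ) (c : E) :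
    ∫ x, ‖x + c‖ ^ 2 * g x ∂μ = ∫ x, ‖x‖ ^ 2 * g x ∂μ + ‖c‖ ^ 2 * ∫ x, g x ∂μ := by
  have hneg : ∫ x, ‖x + c‖ ^ 2 * g x ∂μ = ∫ x, ‖x + -c‖ ^ 2 * g x ∂μ := by
    rw [← integral_neg_eq_self]
    congr 1 with x
    rw [hg_even, ← norm_neg, neg_add, neg_neg]
  have hsum : ∫ x, (‖x + c‖ ^ 2 * g x + ‖x + -c‖ ^ 2 * g x) ∂μ
      = 2 * (∫ x, ‖x‖ ^ 2 * g x ∂μ + ‖c‖ ^ 2 * ∫ x, g x ∂μ) := by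
    rw [← integral_const_mul, ← integral_add hg₂ (hg.const_mul _), ← integral_const_mul]
    congr 1 with x
    rw [← sub_eq_add_neg, ← add_mul, parallelogram_law_with_norm ℝ x c]
    ring
  rw [integral_add (integrable_norm_add_sq_mul hg hg₂ c)
    (integrable_norm_add_sq_mul hg hg₂ (-c)), ← hneg] at hsum
  linarith

end EvenWeight

namespace Complex

variable {k : ℝ}

theorem integral_exp_neg_mul_sq_norm (hk : 0 < k) :
    ∫ z : ℂ, rexp (-k * ‖z‖ ^ 2) = π / k := by
  have h := integral_exp_neg_mul_rpow one_le_two hk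
  norm_num [rpow_two, Real.Gamma_two, rpow_neg_one] at h
  simpa [neg_mul, div_eq_mul_inv] using h

theorem integral_norm_sq_mul_exp_neg_mul_sq_norm (hk : 0 < k) :
    ∫ z : ℂ, ‖z‖ ^ 2 * rexp (-k * ‖z‖ ^ 2) = π / k ^ 2 := by
  have h := integral_rpow_mul_exp_neg_mul_rpow one_le_two (by norm_num : (-2 : ℝ) < 2) hk
  norm_num [rpow_two, Real.Gamma_two] at h
  simpa [neg_mul, div_eq_mul_inv] using h

theorem integrable_exp_neg_mul_sq_norm (hk : 0 < k) :
    Integrable fun z : ℂ ↦ rexp (-k * ‖z‖ ^ 2) :=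
  .of_integral_ne_zero (by rw [integral_exp_neg_mul_sq_norm hk]; positivity)

theorem integrable_norm_sq_mul_exp_neg_mul_sq_norm (hk : 0 < k) :
    Integrable fun z : ℂ ↦ ‖z‖ ^ 2 * rexp (-k * ‖z‖ ^ 2) :=
  .of_integral_ne_zero (by rw [integral_norm_sq_mul_exp_neg_mul_sq_norm hk]; positivity)

theorem integral_norm_add_sq_mul_exp_neg_mul_sq_norm (hk : 0 < k) (c : ℂ) :
    ∫ z : ℂ, ‖z + c‖ ^ 2 * rexp (-k * ‖z‖ ^ 2) = π / k * (1 / k + ‖c‖ ^ 2) := by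
  rw [integral_norm_add_sq_mul_of_even (fun z ↦ by rw [norm_neg])
    (integrable_exp_neg_mul_sq_norm hk) (integrable_norm_sq_mul_exp_neg_mul_sq_norm hk),
    integral_norm_sq_mul_exp_neg_mul_sq_norm hk, integral_exp_neg_mul_sq_norm hk]
  field_simp

end Complex

theorem stmt17_general (q s : ℝ) (hq : 0 < q) (hs0 : 0 < s) (α : ℂ) :
    (∫ β : ℂ,
        (1 / (s * π)) * Real.exp (-(‖α - β‖) ^ 2 / s) *
          (((1 + q) / (π * q ^ 3)) * ((‖β‖) ^ 2 - q / (1 + q)) *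
            Real.exp (-(‖β‖) ^ 2 / q))) =
      ((1 + q) / (π * (q + s) ^ 3)) *
        ((‖α‖) ^ 2 - (q + s) * (1 - s) / (1 + q)) *
        Real.exp (-(‖α‖) ^ 2 / (q + s)) := by
  have hqs : 0 < q + s := by linarith
  have hk : 0 < (q + s) / (s * q) := by positivity
  set c := (q / (q + s)) • α
  set g : ℂ → ℝ := fun z ↦ rexp (-((q + s) / (s * q)) * ‖z‖ ^ 2)
  have hg := Complex.integrable_exp_neg_mul_sq_norm hk
  have hg₂ := Complex.integrable_norm_sq_mul_exp_neg_mul_sq_norm hk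
  have hpoint (β : ℂ) :
      (1 / (s * π)) * rexp (-‖α - β‖ ^ 2 / s) *
        ((1 + q) / (π * q ^ 3) * (‖β‖ ^ 2 - q / (1 + q)) * rexp (-‖β‖ ^ 2 / q)) =
      (1 / (s * π)) * ((1 + q) / (π * q ^ 3)) * rexp (-‖α‖ ^ 2 / (q + s)) *
        ((‖β - c + c‖ ^ 2 - q / (1 + q)) * g (β - c)) := by
    rw [sub_add_cancel]
    linear_combination (1 / (s * π)) * ((1 + q) / (π * q ^ 3)) * (‖β‖ ^ 2 - q / (1 + q)) *
      exp_neg_norm_sub_sq_div_mul_exp_neg_norm_sq_div hq.ne' hs0.ne' hqs.ne' α β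
  have hc : ‖c‖ = q / (q + s) * ‖α‖ := by
    rw [norm_smul, norm_of_nonneg (by positivity)]
  simp_rw [hpoint, integral_const_mul,
    integral_sub_right_eq_self (fun z ↦ (‖z + c‖ ^ 2 - q / (1 + q)) * g z), sub_mul]
  rw [integral_sub (integrable_norm_add_sq_mul hg hg₂ c) (hg.const_mul _), integral_const_mul,
    Complex.integral_norm_add_sq_mul_exp_neg_mul_sq_norm hk,
    Complex.integral_exp_neg_mul_sq_norm hk, hc]
  field_simp
  ring

/-- Gaussian additive noise acting on the P-representation of a
single-photon-added thermal state: the two-dimensional convolution of the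
Gaussian kernel `(1/(sπ)) e^{−|α|²/s}` with
`P(α) = ((1+q)/(πq³))(|α|² − q/(1+q)) e^{−|α|²/q}` equals
`((1+q)/(π(q+s)³))(|α|² − (q+s)(1−s)/(1+q)) e^{−|α|²/(q+s)}`. -/
theorem stmt17 (q s : ℝ) (hq : 0 < q) (hs0 : 0 < s) (hs1 : s < 1) (α : ℂ) :
    (∫ β : ℂ,
        (1 / (s * π)) * Real.exp (-(‖α - β‖) ^ 2 / s) *
          (((1 + q) / (π * q ^ 3)) * ((‖β‖) ^ 2 - q / (1 + q)) *
            Real.exp (-(‖β‖) ^ 2 / q))) =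
      ((1 + q) / (π * (q + s) ^ 3)) *
        ((‖α‖) ^ 2 - (q + s) * (1 - s) / (1 + q)) *
        Real.exp (-(‖α‖) ^ 2 / (q + s)) :=
  stmt17_general q s hq hs0 α
end

section
/- For the function g(r) = ((1+q)/(πq³))·(r² − q/(1+q))·e^{−r²/q} on r ≥ 0 (q > 0), the integrals evaluate to: ∫₀^∞ ∫₀^{2π} |g(r)| r dφ dr = 2e^{−1/(1+q)}(1+q)/q − 1 and ∫₀^∞ ∫₀^{2π} g(r) r dφ dr = 1. -/
/-!
With `a = q/(1+q)`, the radial integrand is a multiple of `f(x) = (x² - a) e^{-x²/q} x`, which has the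
elementary primitive `F(x) = -(q/2)(x² - a + q) e^{-x²/q}` vanishing at infinity. Hence `∫₀^∞ f = -F(0)`.
Since `f ≤ 0` on `(0, √a]` and `f ≥ 0` beyond, `∫₀^∞ |f| = F(0) - 2 F(√a)`, and `F(√a)` produces the
factor `e^{-a/q} = e^{-1/(1+q)}`.
-/

open MeasureTheory Real Set Filter Topology

section SignChange

variable {f F : ℝ → ℝ} {b R : ℝ}

theorem integrableOn_Ioi_deriv_of_nonneg_of_le (hbR : b ≤ R)
    (hF : ∀ x ∈ Ici b, HasDerivAt F (f x) x) (hf : ContinuousOn f (Icc b R))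
    (hF_top : Tendsto F atTop (𝓝 0)) (hf_nonneg : ∀ x ∈ Ioi R, 0 ≤ f x) :
    IntegrableOn f (Ioi b) := by
  have h_tail : IntegrableOn f (Ioi R) :=
    integrableOn_Ioi_deriv_of_nonneg (hF R hbR).continuousAt.continuousWithinAt
      (fun x hx => hF x (hbR.trans (le_of_lt hx))) hf_nonneg hF_top
  rw [← Ioc_union_Ioi_eq_Ioi hbR]
  exact ((hf.integrableOn_Icc).mono_set Ioc_subset_Icc_self).union h_tail

theorem integral_Ioi_abs_eq_of_hasDerivAt (hbR : b ≤ R)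
    (hF : ∀ x ∈ Ici b, HasDerivAt F (f x) x) (hf : ContinuousOn f (Icc b R))
    (hF_top : Tendsto F atTop (𝓝 0)) (hf_nonpos : ∀ x ∈ Ioc b R, f x ≤ 0)
    (hf_nonneg : ∀ x ∈ Ioi R, 0 ≤ f x) :
    ∫ x in Ioi b, |f x| = F b - 2 * F R := by
  have hF_R : ∀ x ∈ Ici R, HasDerivAt F (f x) x := fun x hx => hF x (hbR.trans hx)
  have h_head : IntegrableOn f (Ioc b R) :=
    (hf.integrableOn_Icc).mono_set Ioc_subset_Icc_self
  have h_tail : IntegrableOn f (Ioi R) :=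
    integrableOn_Ioi_deriv_of_nonneg_of_le le_rfl hF_R (hf.mono (Icc_subset_Icc hbR le_rfl)) hF_top
      hf_nonneg
  have h_head_abs : ∫ x in Ioc b R, |f x| = F b - F R := by
    have h_ftc : ∫ x in b..R, f x = F R - F b :=
      intervalIntegral.integral_eq_sub_of_hasDerivAt
        (fun x hx => hF x (by rw [uIcc_of_le hbR] at hx; exact hx.1))
        ((hf.mono (uIcc_of_le hbR).subset).intervalIntegrable)
    rw [intervalIntegral.integral_of_le hbR] at h_ftc
    rw [setIntegral_congr_fun measurableSet_Ioc (fun x hx => abs_of_nonpos (hf_nonpos x hx)),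
      integral_neg, h_ftc, neg_sub]
  have h_tail_abs : ∫ x in Ioi R, |f x| = -F R := by
    rw [setIntegral_congr_fun measurableSet_Ioi (fun x hx => abs_of_nonneg (hf_nonneg x hx)),
      integral_Ioi_of_hasDerivAt_of_tendsto' hF_R h_tail hF_top, zero_sub]
  rw [← Ioc_union_Ioi_eq_Ioi hbR, setIntegral_union (Ioc_disjoint_Ioi le_rfl) measurableSet_Ioi
    h_head.abs h_tail.abs, h_head_abs, h_tail_abs]
  ring

end SignChange

noncomputable section RadialDensity

/-- `r · g(r)` up to the factor `(1+q)/(πq³)`, where the zero of `g` is at `r² = a`. -/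
def radialDensity (a q x : ℝ) : ℝ := (x ^ 2 - a) * exp (-x ^ 2 / q) * x

def radialPrimitive (a q x : ℝ) : ℝ := -(q / 2) * ((x ^ 2 - a + q) * exp (-x ^ 2 / q))

variable {a q : ℝ}

theorem continuous_radialDensity : Continuous (radialDensity a q) := by
  unfold radialDensity
  fun_prop

theorem hasDerivAt_radialPrimitive (hq : q ≠ 0) (x : ℝ) :
    HasDerivAt (radialPrimitive a q) (radialDensity a q x) x := by
  have h_sq : HasDerivAt (fun x : ℝ => x ^ 2) (2 * x) x := by
    simpa using hasDerivAt_pow 2 x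
  have h_exp : HasDerivAt (fun x : ℝ => exp (-x ^ 2 / q)) (exp (-x ^ 2 / q) * (-(2 * x) / q)) x :=
    (h_sq.neg.div_const q).exp
  refine ((((h_sq.sub_const a).add_const q).mul h_exp).const_mul (-(q / 2))).congr_deriv ?_
  unfold radialDensity
  field_simp
  ring

theorem tendsto_radialPrimitive_atTop (hq : 0 < q) :
    Tendsto (radialPrimitive a q) atTop (𝓝 0) := by
  have h_arg : Tendsto (fun x : ℝ => x ^ 2 / q) atTop atTop :=
    (tendsto_pow_atTop two_ne_zero).atTop_div_const hq
  have h_lin := (tendsto_pow_mul_exp_neg_atTop_nhds_zero 1).comp h_arg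
  have h_exp := tendsto_exp_neg_atTop_nhds_zero.comp h_arg
  convert ((h_lin.const_mul q).add (h_exp.const_mul (q - a))).const_mul (-(q / 2)) using 1
  · funext x
    simp only [radialPrimitive, Function.comp_apply, pow_one, neg_div]
    field_simp
    ring
  · simp

theorem radialDensity_nonpos {x : ℝ} (hx : x ∈ Ioc 0 √a) : radialDensity a q x ≤ 0 := by
  have h_sq : x ^ 2 ≤ a := (le_sqrt' hx.1).mp hx.2
  unfold radialDensity
  exact mul_nonpos_of_nonpos_of_nonneg
    (mul_nonpos_of_nonpos_of_nonneg (by linarith) (exp_pos _).le) hx.1.le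

theorem radialDensity_nonneg {x : ℝ} (hx : x ∈ Ioi √a) : 0 ≤ radialDensity a q x := by
  have hx0 : 0 < x := (sqrt_nonneg a).trans_lt hx
  have h_sq : a < x ^ 2 := (sqrt_lt' hx0).mp hx
  unfold radialDensity
  exact mul_nonneg (mul_nonneg (by linarith) (exp_pos _).le) hx0.le

theorem integral_Ioi_radialDensity (hq : 0 < q) :
    ∫ x in Ioi 0, radialDensity a q x = q * (q - a) / 2 := by
  have h_int : IntegrableOn (radialDensity a q) (Ioi 0) :=
    integrableOn_Ioi_deriv_of_nonneg_of_le (sqrt_nonneg a)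
      (fun x _ => hasDerivAt_radialPrimitive hq.ne' x) continuous_radialDensity.continuousOn
      (tendsto_radialPrimitive_atTop hq) (fun x hx => radialDensity_nonneg hx)
  rw [integral_Ioi_of_hasDerivAt_of_tendsto' (fun x _ => hasDerivAt_radialPrimitive hq.ne' x)
    h_int (tendsto_radialPrimitive_atTop hq)]
  simp [radialPrimitive]
  ring

theorem integral_Ioi_abs_radialDensity (hq : 0 < q) (ha : 0 ≤ a) :
    ∫ x in Ioi 0, |radialDensity a q x| = q * (a - q) / 2 + q ^ 2 * exp (-a / q) := by
  rw [integral_Ioi_abs_eq_of_hasDerivAt (sqrt_nonneg a)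
    (fun x _ => hasDerivAt_radialPrimitive hq.ne' x) continuous_radialDensity.continuousOn
    (tendsto_radialPrimitive_atTop hq) (fun x hx => radialDensity_nonpos hx)
    (fun x hx => radialDensity_nonneg hx)]
  simp [radialPrimitive, sq_sqrt ha]
  ring

end RadialDensity

/-- For the radial P-representation
`g(r) = ((1+q)/(πq³))(r² − q/(1+q)) e^{−r²/q}` of a single-photon-added thermal
state, the total absolute mass is `2e^{−1/(1+q)}(1+q)/q − 1` and the total mass
is `1` (the `φ` integration contributing a factor `2π`). -/
theorem stmt18 (q : ℝ) (hq : 0 < q) :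
    (∫ r in Set.Ioi (0 : ℝ),
        (∫ _φ in (0 : ℝ)..(2 * π),
          |((1 + q) / (π * q ^ 3)) * (r ^ 2 - q / (1 + q)) *
              Real.exp (-r ^ 2 / q)| * r) =
      2 * Real.exp (-1 / (1 + q)) * (1 + q) / q - 1) ∧
    (∫ r in Set.Ioi (0 : ℝ),
        (∫ _φ in (0 : ℝ)..(2 * π),
          ((1 + q) / (π * q ^ 3)) * (r ^ 2 - q / (1 + q)) *
              Real.exp (-r ^ 2 / q) * r) =
      1) := by
  set a := q / (1 + q)
  set c := (1 + q) / (π * q ^ 3)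
  have hc : 0 < c := by positivity
  have h_exp : -a / q = -1 / (1 + q) := by
    simp only [a]
    field_simp
  have h_abs : ∀ r ∈ Ioi (0 : ℝ), ∫ _φ in (0 : ℝ)..(2 * π), |c * (r ^ 2 - a) * exp (-r ^ 2 / q)| * r
      = 2 * π * c * |radialDensity a q r| := fun r hr => by
    simp only [intervalIntegral.integral_const, radialDensity, abs_mul, abs_of_pos hc,
      abs_of_pos (exp_pos _), abs_of_pos (mem_Ioi.mp hr), smul_eq_mul]
    ring
  have h_signed : ∀ r ∈ Ioi (0 : ℝ), ∫ _φ in (0 : ℝ)..(2 * π), c * (r ^ 2 - a) * exp (-r ^ 2 / q) * r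
      = 2 * π * c * radialDensity a q r := fun r _ => by
    simp only [intervalIntegral.integral_const, radialDensity, smul_eq_mul]
    ring
  constructor
  · rw [setIntegral_congr_fun measurableSet_Ioi h_abs, integral_const_mul,
      integral_Ioi_abs_radialDensity hq (by positivity), h_exp]
    simp only [a, c]
    field_simp
    ring
  · rw [setIntegral_congr_fun measurableSet_Ioi h_signed, integral_const_mul,
      integral_Ioi_radialDensity hq]
    simp only [a, c]
    field_simp
    ring
end
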